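/- The sets {I⁷,II⁷}, {I⁷,IV⁷}, {II⁷,III⁷}, {III⁷,IV⁷}, {V⁷}, {VII⁷} are exactly the minimal cadential sets for the tetradic interpretation of the major scale. -/
import Mathlib


def Cmaj : Finset (ZMod 12) := {0, 2, 4, 5, 7, 9, 11}

def Transpose (a : ZMod 12) (S : Finset (ZMod 12)) : Finset (ZMod 12) :=
  S.image (fun x => x + a)

def scaleTone : Fin 7 → ZMod 12 := ![0, 2, 4, 5, 7, 9, 11]

/-- The `i`-th tetradic degree (0-based: `0 ↦ I⁷`, ..., `6 ↦ VII⁷`). -/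
def tetrad (i : Fin 7) : Finset (ZMod 12) :=
  {scaleTone i, scaleTone (i + 2), scaleTone (i + 4), scaleTone (i + 6)}

def Cadential (S : Finset (Fin 7)) : Prop :=
  ∀ a : ZMod 12, S.biUnion tetrad ⊆ Transpose a Cmaj → a = 0

instance : DecidablePred Cadential := fun S => by unfold Cadential; infer_instance

set_option maxRecDepth 10000 in
/-- {I⁷,II⁷}, {I⁷,IV⁷}, {II⁷,III⁷}, {III⁷,IV⁷}, {V⁷}, {VII⁷} are exactly the
minimal cadential sets for the tetradic interpretation. -/
theorem minimal_cadential_sets_tetradic :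
    ∀ S : Finset (Fin 7),
      (Cadential S ∧ ∀ S' ⊂ S, ¬ Cadential S') ↔
        S ∈ ({({0,1} : Finset (Fin 7)), {0,3}, {1,2}, {2,3}, {4}, {6}} :
          Finset (Finset (Fin 7))) := by
  set_option maxRecDepth 10000 in
  decide
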